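/- arXiv:2008.09573 — 2 statements merged into one kernel-verified Lean document; each statement's English description precedes it below -/
import Mathlib

section
/- Let N be a finitely generated module over R = ℤ_p[[X]]. Suppose there exists a height-one prime ideal Q₀ of R with Q₀ ≠ (p) such that N/Q₀N is finite. Then N is a torsion R-module. -/
/-!
If `Q` were in the support of `N`, it would also be in the support of `N ⧸ Q • N`
(`Module.support_quotient`), so some element of this finite module would have annihilator
inside `Q`, making `R ⧸ Q` finite. But a finite domain is a field, so `Q` would be the
maximal ideal of `ℤ_[p]⟦X⟧`, which strictly contains the nonzero prime `(X)`; this contradicts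
height one. Hence `N_Q = 0`, i.e. every element of `N` is killed by some `s ∉ Q`, in particular
`s ≠ 0`.
-/

def IsHeightOnePrime {R : Type*} [CommRing R] [IsDomain R] (P : Ideal R) : Prop :=
  P.IsPrime ∧ P ≠ ⊥ ∧ ∀ Q : Ideal R, Q.IsPrime → Q < P → Q = ⊥

open IsLocalRing PowerSeries

lemma Module.finite_quotient_of_mem_support {R M : Type*} [CommRing R] [AddCommGroup M]
    [Module R M] [Finite M] {p : PrimeSpectrum R} (hp : p ∈ Module.support R M) :
    Finite (R ⧸ p.asIdeal) := by
  obtain ⟨m, hm⟩ := Module.mem_support_iff_exists_annihilator.mp hp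
  rw [Ideal.annihilator_span_singleton_eq_torsionOf] at hm
  have : Finite (R ⧸ Ideal.torsionOf R M m) :=
    .of_equiv _ (Ideal.quotTorsionOfEquivSpanSingleton R M m).symm.toEquiv
  exact .of_surjective _ (Ideal.Quotient.factor_surjective hm)

theorem Module.isTorsion_of_finite_quotient_smul_top {R M : Type*} [CommRing R] [IsDomain R]
    [AddCommGroup M] [Module R M] [Module.Finite R M] (Q : Ideal R) [Q.IsPrime]
    (hQ : Infinite (R ⧸ Q)) (hM : Finite (M ⧸ (Q • ⊤ : Submodule R M))) :
    Module.IsTorsion R M := by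
  have hQM : (⟨Q, ‹_›⟩ : PrimeSpectrum R) ∉ Module.support R M := by
    intro hQM
    have hQM' : ⟨Q, ‹_›⟩ ∈ Module.support R (M ⧸ (Q • ⊤ : Submodule R M)) := by
      rw [Module.support_quotient]
      exact ⟨hQM, le_refl Q⟩
    exact hQ.not_finite (Module.finite_quotient_of_mem_support hQM')
  intro m
  obtain ⟨s, hsQ, hsm⟩ := Module.notMem_support_iff'.mp hQM m
  exact ⟨⟨s, mem_nonZeroDivisors_of_ne_zero fun hs ↦ hsQ (hs ▸ Q.zero_mem)⟩, hsm⟩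

theorem PowerSeries.span_X_lt_maximalIdeal {A : Type*} [CommRing A] [IsLocalRing A]
    (hA : maximalIdeal A ≠ ⊥) : Ideal.span {X} < maximalIdeal A⟦X⟧ := by
  have mem_of_constantCoeff_mem {f : A⟦X⟧} (hf : constantCoeff f ∈ maximalIdeal A) :
      f ∈ maximalIdeal A⟦X⟧ := by
    simpa [mem_maximalIdeal, mem_nonunits_iff, isUnit_iff_constantCoeff] using hf
  obtain ⟨a, ha, ha0⟩ := Submodule.exists_mem_ne_zero_of_ne_bot hA
  refine SetLike.lt_iff_le_and_exists.mpr ⟨?_, C a, ?_, ?_⟩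
  · rw [Ideal.span_le, Set.singleton_subset_iff]
    exact mem_of_constantCoeff_mem (by simp)
  · exact mem_of_constantCoeff_mem (by simpa using ha)
  · simpa [Ideal.mem_span_singleton, X_dvd_iff] using ha0

theorem PowerSeries.infinite_quotient_of_isHeightOnePrime {A : Type*} [CommRing A] [IsDomain A]
    [IsLocalRing A] (hA : maximalIdeal A ≠ ⊥) {Q : Ideal A⟦X⟧} (hQ : IsHeightOnePrime Q) :
    Infinite (A⟦X⟧ ⧸ Q) := by
  obtain ⟨hQprime, -, hQmin⟩ := hQ
  rw [← not_finite_iff_infinite]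
  intro hfin
  have hQmax : Q = maximalIdeal A⟦X⟧ :=
    eq_maximalIdeal <| Ideal.Quotient.maximal_of_isField _ (Finite.isField_of_domain _)
  have := hQmin _ span_X_isPrime (hQmax ▸ span_X_lt_maximalIdeal hA)
  exact X_ne_zero (Ideal.span_singleton_eq_bot.mp this)

theorem stmt2_general (p : ℕ) [Fact (Nat.Prime p)]
    (N : Type*) [AddCommGroup N] [Module (PowerSeries ℤ_[p]) N]
    [Module.Finite (PowerSeries ℤ_[p]) N]
    (Q₀ : Ideal (PowerSeries ℤ_[p])) (hQ₀ : IsHeightOnePrime Q₀)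
    (hfin : Finite (N ⧸ (Q₀ • ⊤ : Submodule (PowerSeries ℤ_[p]) N))) :
    Module.IsTorsion (PowerSeries ℤ_[p]) N :=
  haveI := hQ₀.1
  Module.isTorsion_of_finite_quotient_smul_top Q₀
    (infinite_quotient_of_isHeightOnePrime (IsDiscreteValuationRing.not_a_field ℤ_[p]) hQ₀) hfin

theorem stmt2 (p : ℕ) [Fact (Nat.Prime p)] (hodd : Odd p)
    (N : Type*) [AddCommGroup N] [Module (PowerSeries ℤ_[p]) N]
    [Module.Finite (PowerSeries ℤ_[p]) N]
    (Q₀ : Ideal (PowerSeries ℤ_[p])) (hQ₀ : IsHeightOnePrime Q₀)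
    (hQ₀p : Q₀ ≠ Ideal.span {(p : PowerSeries ℤ_[p])})
    (hfin : Finite (N ⧸ (Q₀ • ⊤ : Submodule (PowerSeries ℤ_[p]) N))) :
    Module.IsTorsion (PowerSeries ℤ_[p]) N :=
  stmt2_general p N Q₀ hQ₀ hfin
end

section
/- Fix an odd prime p. Let C' be a countable set of ideals of ℤ_p[[X]]. Then there exists u ∈ 1 + pℤ_p such that the principal ideal (X + 1 − u) does not belong to C', and for this u and every n ≥ 0, the quotient ring ℤ_p[[X]]/((X + 1 − u), (X+1)^{p^n} − u^{p^n}) is infinite (isomorphic to ℤ_p). -/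
/-!
For `a` in the maximal ideal of `ℤ_p`, the polynomial `X - a` is distinguished, so Weierstrass
division identifies `ℤ_p[[X]] ⧸ (X - a)` with `ℤ_p[X] ⧸ (X - a) ≅ ℤ_p`, and `X` maps to `a`.
Hence `a ↦ (X - a)` is injective on `pℤ_p`, which is uncountable because its fraction field `ℚ_p`
is, so some `u = 1 + a` gives an ideal `(X + 1 - u)` outside `C'`. Since `X + 1 - u` divides
`(X + 1)^{p^n} - u^{p^n}`, the quotient in question is `ℤ_p[[X]] ⧸ (X - a) ≅ ℤ_p`.
-/

open PowerSeries

theorem uncountable_of_isFractionRing (A K : Type*) [CommRing A] [NontriviallyNormedField K]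
    [CompleteSpace K] [Algebra A K] [IsFractionRing A K] : Uncountable A := by
  by_contra hA
  have : Countable A := not_uncountable_iff.mp hA
  have hK : Countable K := by
    refine Function.Surjective.countable
      (f := fun x : A × A => algebraMap A K x.1 / algebraMap A K x.2) fun z => ?_
    obtain ⟨x, y, -, h⟩ := IsFractionRing.div_surjective A z
    exact ⟨(x, y), h⟩
  exact (Cardinal.aleph0_lt_continuum.trans_le
    (continuum_le_cardinal_of_nontriviallyNormedField K)).not_ge (Cardinal.mk_le_aleph0_iff.mpr hK)

instance (p : ℕ) [Fact p.Prime] : Uncountable ℤ_[p] := uncountable_of_isFractionRing ℤ_[p] ℚ_[p]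

theorem Set.Countable.exists_apply_notMem {α β : Type*} [Uncountable α] {s : Set β}
    (hs : s.Countable) {f : α → β} (hf : Function.Injective f) : ∃ x, f x ∉ s := by
  by_contra! h
  have huniv : f ⁻¹' s = Set.univ := Set.eq_univ_of_forall h
  exact Set.not_countable_univ (huniv ▸ hs.preimage_of_injOn hf.injOn)

theorem Polynomial.isDistinguishedAt_X_sub_C {A : Type*} [CommRing A] {I : Ideal A} {a : A}
    (ha : a ∈ I) : (Polynomial.X - Polynomial.C a).IsDistinguishedAt I where
  mem {n} hn := by
    obtain rfl : n = 0 := by have := Polynomial.natDegree_X_sub_C_le a; omega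
    simpa using ha
  monic := Polynomial.monic_X_sub_C a

namespace PowerSeries

variable {A : Type*} [CommRing A] {I : Ideal A} [IsAdicComplete I A] {a : A}

noncomputable def quotientSpanXSubCAlgEquiv (ha : a ∈ I) :
    (A⟦X⟧ ⧸ Ideal.span {X - C a}) ≃ₐ[A] A :=
  (Ideal.quotientEquivAlgOfEq A (by simp)).trans
    ((Polynomial.isDistinguishedAt_X_sub_C ha).algEquivQuotient.symm.trans
      (Polynomial.quotientSpanXSubCAlgEquiv a))

theorem quotientSpanXSubCAlgEquiv_mk_C (ha : a ∈ I) (c : A) :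
    quotientSpanXSubCAlgEquiv ha (Ideal.Quotient.mk _ (C c)) = c :=
  (quotientSpanXSubCAlgEquiv ha).commutes c

theorem quotientSpanXSubCAlgEquiv_mk_X (ha : a ∈ I) :
    quotientSpanXSubCAlgEquiv ha (Ideal.Quotient.mk _ X) = a := by
  rw [(Ideal.Quotient.mk_eq_mk_iff_sub_mem X (C a)).mpr (Ideal.mem_span_singleton_self _)]
  exact quotientSpanXSubCAlgEquiv_mk_C ha a

theorem injOn_span_X_sub_C : Set.InjOn (fun a : A => Ideal.span {X - C a}) I := by
  intro a _ b hb (hab : Ideal.span {X - C a} = Ideal.span {X - C b})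
  have hmem : X - C a ∈ Ideal.span {X - C b} := hab ▸ Ideal.mem_span_singleton_self _
  have := congrArg (quotientSpanXSubCAlgEquiv hb) (Ideal.Quotient.eq_zero_iff_mem.mpr hmem)
  rw [map_sub, map_sub, quotientSpanXSubCAlgEquiv_mk_X, quotientSpanXSubCAlgEquiv_mk_C, map_zero,
    sub_eq_zero] at this
  exact this.symm

end PowerSeries

theorem stmt8_general (p : ℕ) [Fact (Nat.Prime p)]
    (C' : Set (Ideal (PowerSeries ℤ_[p]))) (hC' : C'.Countable) :
    ∃ u : ℤ_[p], (∃ lam : ℤ_[p], u = 1 + p * lam) ∧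
      Ideal.span {(X + 1 - C u : PowerSeries ℤ_[p])} ∉ C' ∧
      ∀ n : ℕ,
        Infinite (PowerSeries ℤ_[p] ⧸ Ideal.span
            {(X + 1 - C u : PowerSeries ℤ_[p]),
             ((X + 1) ^ p ^ n - C (u ^ p ^ n))}) ∧
        Nonempty ((PowerSeries ℤ_[p] ⧸ Ideal.span
            {(X + 1 - C u : PowerSeries ℤ_[p]),
             ((X + 1) ^ p ^ n - C (u ^ p ^ n))}) ≃+* ℤ_[p]) := by
  have hmem (lam : ℤ_[p]) : (p : ℤ_[p]) * lam ∈ IsLocalRing.maximalIdeal ℤ_[p] :=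
    Ideal.mul_mem_right _ _
      (PadicInt.maximalIdeal_eq_span_p (p := p) ▸ Ideal.mem_span_singleton_self _)
  have hinj : Function.Injective fun lam : ℤ_[p] => Ideal.span {X - C ((p : ℤ_[p]) * lam)} :=
    fun l m hlm => mul_left_cancel₀ (Nat.cast_ne_zero.mpr (Fact.out : p.Prime).ne_zero)
      (injOn_span_X_sub_C (hmem l) (hmem m) hlm)
  obtain ⟨lam, hlam⟩ := hC'.exists_apply_notMem hinj
  have hgen : (X + 1 - C (1 + p * lam) : ℤ_[p]⟦X⟧) = X - C (p * lam) := by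
    rw [map_add, map_one]; ring
  refine ⟨1 + p * lam, ⟨lam, rfl⟩, hgen ▸ hlam, fun n => ?_⟩
  have hspan : Ideal.span {X + 1 - C (1 + p * lam), (X + 1) ^ p ^ n - C ((1 + p * lam) ^ p ^ n)} =
      Ideal.span {X - C ((p : ℤ_[p]) * lam)} := by
    rw [Ideal.span_pair_eq_span_left_iff_dvd.mpr, hgen]
    simpa only [map_pow] using sub_dvd_pow_sub_pow (X + 1 : ℤ_[p]⟦X⟧) (C (1 + p * lam)) (p ^ n)
  let e := (Ideal.quotEquivOfEq hspan).trans (quotientSpanXSubCAlgEquiv (hmem lam)).toRingEquiv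
  exact ⟨Infinite.of_injective e.symm e.symm.injective, ⟨e⟩⟩

theorem stmt8 (p : ℕ) [Fact (Nat.Prime p)] (hodd : Odd p)
    (C' : Set (Ideal (PowerSeries ℤ_[p]))) (hC' : C'.Countable) :
    ∃ u : ℤ_[p], (∃ lam : ℤ_[p], u = 1 + p * lam) ∧
      Ideal.span {(X + 1 - C u : PowerSeries ℤ_[p])} ∉ C' ∧
      ∀ n : ℕ,
        Infinite (PowerSeries ℤ_[p] ⧸ Ideal.span
            {(X + 1 - C u : PowerSeries ℤ_[p]),
             ((X + 1) ^ p ^ n - C (u ^ p ^ n))}) ∧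
        Nonempty ((PowerSeries ℤ_[p] ⧸ Ideal.span
            {(X + 1 - C u : PowerSeries ℤ_[p]),
             ((X + 1) ^ p ^ n - C (u ^ p ^ n))}) ≃+* ℤ_[p]) :=
  stmt8_general p C' hC'
end
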